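/- Let δ₁ ~ N(μ₁, Σ₁) and δ₂ ~ N(μ₂, Σ₂) be independent Gaussian vectors in ℝ^N, Σ_η symmetric strictly positive definite with Σ_η - Σ₂ strictly positive definite, and Δρ₁, Δρ₂ ∈ ℝ^N. Then with R = exp((‖Δρ₂ - δ₂‖²_{Σ_η⁻¹} - ‖Δρ₁ - δ₁‖²_{Σ_η⁻¹})/2), one has E[R] = sqrt(det S₁ det S₂ /(det Σ₁ det Σ₂)) exp(-C₁ - C₂), where S₁⁻¹ = Σ_η⁻¹ + Σ₁⁻¹, S₂⁻¹ = Σ₂⁻¹ - Σ_η⁻¹, 2C₁ = ‖Δρ₁‖²_{Σ_η⁻¹} + ‖μ₁‖²_{Σ₁⁻¹} - ‖α₁‖²_{S₁⁻¹} with α₁ = S₁(Σ_η⁻¹Δρ₁ + Σ₁⁻¹μ₁), and 2C₂ = ‖μ₂‖²_{Σ₂⁻¹} - ‖Δρ₂‖²_{Σ_η⁻¹} - ‖α₂‖²_{S₂⁻¹} with α₂ = S₂(Σ₂⁻¹μ₂ - Σ_η⁻¹Δρ₂). -/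

import Mathlib

open MeasureTheory Real Matrix

/-- Quadratic form `xᵀ Q x` induced by a matrix `Q`. -/
def quadForm {N : ℕ} (Q : Matrix (Fin N) (Fin N) ℝ) (x : Fin N → ℝ) : ℝ :=
  x ⬝ᵥ Q.mulVec x

/-- Density of the multivariate Gaussian `N(μ, Cov)` on `ℝ^N`. -/
noncomputable def gaussDensity {N : ℕ} (μ : Fin N → ℝ) (Cov : Matrix (Fin N) (Fin N) ℝ)
    (x : Fin N → ℝ) : ℝ :=
  (Real.sqrt ((2 * π) ^ N * Cov.det))⁻¹ * Real.exp (-(quadForm Cov⁻¹ (x - μ)) / 2)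

/-!
Independence factors the expectation into two Gaussian integrals over `ℝ^N`. In each, the
exponent is `‖x - a‖²_A + ‖x - μ‖²_{Σ⁻¹}`, with `A = Σ_η⁻¹` for `δ₁` and `A = -Σ_η⁻¹` for `δ₂`.
Completing the square turns it into `‖x - α‖²_{A + Σ⁻¹}` plus a constant, and `A + Σ⁻¹ = S⁻¹` is
positive definite; for `δ₂` this is where `Σ₂ < Σ_η` enters, since inversion reverses the
Loewner order. Writing `S⁻¹ = Rᵀ R`, the substitution `y = R x` reduces `∫ exp (-‖x‖²_{S⁻¹} / 2)`
to the standard Gaussian integral `(2π)^{N/2}`, so each factor contributes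
`√(det S / det Σ) e^{-C}`.
-/

namespace Matrix

variable {n : Type*}

lemma PosDef.isSymm [Fintype n] {A : Matrix n n ℝ} (hA : A.PosDef) : A.IsSymm :=
  isHermitian_iff_isSymm.mp hA.isHermitian

variable [Fintype n]

lemma IsSymm.dotProduct_mulVec_comm {A : Matrix n n ℝ} (hA : A.IsSymm) (x y : n → ℝ) :
    x ⬝ᵥ A *ᵥ y = y ⬝ᵥ A *ᵥ x := by
  rw [dotProduct_mulVec, ← mulVec_transpose, hA.eq, dotProduct_comm]

variable [DecidableEq n]

lemma PosDef.isUnit_det {A : Matrix n n ℝ} (hA : A.PosDef) : IsUnit A.det :=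
  (isUnit_iff_isUnit_det A).mp hA.isUnit

lemma PosDef.inv_sub_inv {A B : Matrix n n ℝ} (hB : B.PosDef) (hAB : (A - B).PosDef) :
    (B⁻¹ - A⁻¹).PosDef := by
  have hA : A.PosDef := by simpa using hB.add hAB
  refine .of_dotProduct_mulVec_pos (hB.inv.isHermitian.sub hA.inv.isHermitian) fun x hx => ?_
  set u := A⁻¹ *ᵥ x
  set v := B⁻¹ *ᵥ x
  have hAu : A *ᵥ u = x := by
    simp [u, mulVec_mulVec, mul_nonsing_inv _ hA.isUnit_det]
  have hBv : B *ᵥ v = x := by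
    simp [v, mulVec_mulVec, mul_nonsing_inv _ hB.isUnit_det]
  have hu : u ≠ 0 := fun h => hx (by rw [← hAu, h, mulVec_zero])
  have hBuv : u ⬝ᵥ B *ᵥ v = x ⬝ᵥ u := by rw [hBv, dotProduct_comm]
  have hBvu : v ⬝ᵥ B *ᵥ u = x ⬝ᵥ u := by
    rw [hB.isSymm.dotProduct_mulVec_comm, hBuv]
  have key : x ⬝ᵥ (B⁻¹ - A⁻¹) *ᵥ x = u ⬝ᵥ (A - B) *ᵥ u + (v - u) ⬝ᵥ B *ᵥ (v - u) := by
    simp only [sub_mulVec, mulVec_sub, dotProduct_sub, sub_dotProduct, hBuv, hBvu]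
    rw [hAu, hBv, dotProduct_comm u, dotProduct_comm v]
    ring
  simpa [key] using add_pos_of_pos_of_nonneg (hAB.dotProduct_mulVec_pos hu)
    (hB.posSemidef.dotProduct_mulVec_nonneg (v - u))

-- The operator norm is opened only to make matrices a C⋆-algebra.
open scoped MatrixOrder Matrix.Norms.L2Operator in
lemma PosSemidef.exists_eq_transpose_mul_self {M : Matrix n n ℝ} (hM : M.PosSemidef) :
    ∃ R : Matrix n n ℝ, M = Rᵀ * R := by
  simpa [star_eq_conjTranspose] using CStarAlgebra.nonneg_iff_eq_star_mul_self.mp hM.nonneg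

end Matrix

section GaussianIntegral

variable {ι : Type*} [Fintype ι]

lemma integral_exp_neg_dotProduct_self_div_two :
    ∫ y : ι → ℝ, exp (-(y ⬝ᵥ y) / 2) = √(2 * π) ^ Fintype.card ι := by
  have hprod (y : ι → ℝ) : exp (-(y ⬝ᵥ y) / 2) = ∏ i, exp (-(1 / 2) * y i ^ 2) := by
    rw [← exp_sum]
    simp only [dotProduct, ← Finset.sum_neg_distrib, Finset.sum_div]
    exact congrArg exp (Finset.sum_congr rfl fun i _ => by ring)
  simp_rw [hprod]
  rw [integral_fintype_prod_volume_eq_pow (fun t => exp (-(1 / 2) * t ^ 2)), integral_gaussian]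
  rw [show π / (1 / 2) = 2 * π by ring]

lemma integral_comp_mulVec [DecidableEq ι] {E : Type*} [NormedAddCommGroup E] [NormedSpace ℝ E]
    {R : Matrix ι ι ℝ} (hR : R.det ≠ 0) (f : (ι → ℝ) → E) :
    ∫ x, f (R *ᵥ x) = |R.det⁻¹| • ∫ y, f y := by
  let e := ((toLin' R).equivOfDetNeZero (by rwa [LinearMap.det_toLin'])).toContinuousLinearEquiv
  have := integral_map_equiv (μ := volume) e.toHomeomorph.toMeasurableEquiv f
  change ∫ y, f y ∂Measure.map (toLin' R) volume = ∫ x, f (R *ᵥ x) at this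
  rw [← this, map_matrix_volume_pi_eq_smul_volume_pi hR, integral_smul_measure,
    ENNReal.toReal_ofReal (abs_nonneg _)]

end GaussianIntegral

lemma quadForm_transpose_mul_self {N : ℕ} (R : Matrix (Fin N) (Fin N) ℝ) (x : Fin N → ℝ) :
    quadForm (Rᵀ * R) x = (R *ᵥ x) ⬝ᵥ (R *ᵥ x) := by
  rw [quadForm, ← mulVec_mulVec, dotProduct_mulVec, vecMul_transpose]

lemma integral_exp_neg_quadForm_div_two {N : ℕ} {M : Matrix (Fin N) (Fin N) ℝ} (hM : M.PosDef) :
    ∫ x : Fin N → ℝ, exp (-quadForm M x / 2) = √((2 * π) ^ N / M.det) := by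
  obtain ⟨R, rfl⟩ := hM.posSemidef.exists_eq_transpose_mul_self
  have hdet : (Rᵀ * R).det = R.det ^ 2 := by rw [det_mul, det_transpose, sq]
  have hR : R.det ≠ 0 := fun h => by simpa [hdet, h] using hM.det_pos
  simp_rw [quadForm_transpose_mul_self]
  have hpow : √((2 * π) ^ N) = √(2 * π) ^ N := by
    rw [← sqrt_sq (by positivity : 0 ≤ √(2 * π) ^ N), ← pow_mul, mul_comm N 2, pow_mul,
      sq_sqrt (by positivity)]
  rw [integral_comp_mulVec hR (fun y => exp (-(y ⬝ᵥ y) / 2)),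
    integral_exp_neg_dotProduct_self_div_two, Fintype.card_fin, hdet, sqrt_div' _ (sq_nonneg _),
    sqrt_sq_eq_abs, abs_inv, hpow, smul_eq_mul, inv_mul_eq_div]

section QuadForm

variable {N : ℕ}

lemma quadForm_sub_comm (M : Matrix (Fin N) (Fin N) ℝ) (x y : Fin N → ℝ) :
    quadForm M (x - y) = quadForm M (y - x) := by
  rw [← neg_sub, quadForm, quadForm, mulVec_neg, neg_dotProduct, dotProduct_neg, neg_neg]

lemma quadForm_neg (M : Matrix (Fin N) (Fin N) ℝ) (x : Fin N → ℝ) :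
    quadForm (-M) x = -quadForm M x := by
  rw [quadForm, quadForm, neg_mulVec, dotProduct_neg]

lemma quadForm_add (A B : Matrix (Fin N) (Fin N) ℝ) (x : Fin N → ℝ) :
    quadForm (A + B) x = quadForm A x + quadForm B x := by
  rw [quadForm, quadForm, quadForm, add_mulVec, dotProduct_add]

lemma quadForm_sub {M : Matrix (Fin N) (Fin N) ℝ} (hM : M.IsSymm) (x v : Fin N → ℝ) :
    quadForm M (x - v) = quadForm M x - 2 * (x ⬝ᵥ M *ᵥ v) + quadForm M v := by
  simp only [quadForm, mulVec_sub, dotProduct_sub, sub_dotProduct, hM.dotProduct_mulVec_comm v x]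
  ring

lemma quadForm_sub_add_quadForm_sub {A B : Matrix (Fin N) (Fin N) ℝ} (hA : A.IsSymm)
    (hB : B.IsSymm) {a b α : Fin N → ℝ} (hα : (A + B) *ᵥ α = A *ᵥ a + B *ᵥ b) (x : Fin N → ℝ) :
    quadForm A (x - a) + quadForm B (x - b) =
      quadForm (A + B) (x - α) + (quadForm A a + quadForm B b - quadForm (A + B) α) := by
  rw [quadForm_sub hA, quadForm_sub hB, quadForm_sub (hA.add hB), hα, dotProduct_add,
    quadForm_add]
  ring

lemma integral_exp_neg_quadForm_sub_add_quadForm_sub {A B : Matrix (Fin N) (Fin N) ℝ}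
    (hA : A.IsSymm) (hB : B.IsSymm) (hAB : (A + B).PosDef) {a b α : Fin N → ℝ}
    (hα : (A + B) *ᵥ α = A *ᵥ a + B *ᵥ b) :
    ∫ x, exp (-(quadForm A (x - a) + quadForm B (x - b)) / 2) =
      √((2 * π) ^ N / (A + B).det) *
        exp (-(quadForm A a + quadForm B b - quadForm (A + B) α) / 2) := by
  simp_rw [quadForm_sub_add_quadForm_sub hA hB hα, neg_add, add_div, exp_add]
  rw [integral_mul_const, integral_sub_right_eq_self (fun x => exp (-quadForm (A + B) x / 2)) α,
    integral_exp_neg_quadForm_div_two hAB]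

end QuadForm

lemma integral_exp_neg_quadForm_mul_gaussDensity {N : ℕ} {A S : Matrix (Fin N) (Fin N) ℝ}
    (hA : A.IsSymm) (hS : S.PosDef) (hP : (A + S⁻¹).PosDef) (a μ : Fin N → ℝ) :
    ∫ x, exp (-quadForm A (x - a) / 2) * gaussDensity μ S x =
      √((A + S⁻¹)⁻¹.det / S.det) * exp (-(quadForm A a + quadForm S⁻¹ μ -
        quadForm (A + S⁻¹) ((A + S⁻¹)⁻¹ *ᵥ (A *ᵥ a + S⁻¹ *ᵥ μ))) / 2) := by
  have hα : (A + S⁻¹) *ᵥ ((A + S⁻¹)⁻¹ *ᵥ (A *ᵥ a + S⁻¹ *ᵥ μ)) = A *ᵥ a + S⁻¹ *ᵥ μ := by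
    rw [mulVec_mulVec, mul_nonsing_inv _ hP.isUnit_det, one_mulVec]
  have hprod (x : Fin N → ℝ) : exp (-quadForm A (x - a) / 2) * gaussDensity μ S x =
      (√((2 * π) ^ N * S.det))⁻¹ * exp (-(quadForm A (x - a) + quadForm S⁻¹ (x - μ)) / 2) := by
    rw [gaussDensity, neg_add, add_div, exp_add]
    ring
  have hdet : (A + S⁻¹)⁻¹.det = (A + S⁻¹).det⁻¹ := by
    rw [det_nonsing_inv, Ring.inverse_eq_inv']
  have hPdet := hP.det_pos
  have hSdet := hS.det_pos
  simp_rw [hprod]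
  rw [integral_const_mul, integral_exp_neg_quadForm_sub_add_quadForm_sub hA hS.inv.isSymm hP hα,
    ← mul_assoc, hdet, ← sqrt_inv, ← sqrt_mul (by positivity)]
  congr 2
  field_simp

/-- Closed-form first moment of the approximate likelihood ratio, for independent
Gaussian solver errors δ₁ ~ N(μ₁, S₁), δ₂ ~ N(μ₂, S₂) and observation covariance Sη
with Sη - S₂ strictly positive definite. -/
theorem stmt5 (N : ℕ) (μ₁ μ₂ Δρ₁ Δρ₂ : Fin N → ℝ)
    (Sη S₁ S₂ : Matrix (Fin N) (Fin N) ℝ)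
    (hη : Sη.PosDef) (h1 : S₁.PosDef) (h2 : S₂.PosDef) (hdiff : (Sη - S₂).PosDef) :
    ∀ T₁ T₂ : Matrix (Fin N) (Fin N) ℝ,
      T₁ = (Sη⁻¹ + S₁⁻¹)⁻¹ → T₂ = (S₂⁻¹ - Sη⁻¹)⁻¹ →
    ∀ α₁ α₂ : Fin N → ℝ,
      α₁ = T₁.mulVec (Sη⁻¹.mulVec Δρ₁ + S₁⁻¹.mulVec μ₁) →
      α₂ = T₂.mulVec (S₂⁻¹.mulVec μ₂ - Sη⁻¹.mulVec Δρ₂) →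
    ∀ C₁ C₂ : ℝ,
      C₁ = (quadForm Sη⁻¹ Δρ₁ + quadForm S₁⁻¹ μ₁ - quadForm T₁⁻¹ α₁) / 2 →
      C₂ = (quadForm S₂⁻¹ μ₂ - quadForm Sη⁻¹ Δρ₂ - quadForm T₂⁻¹ α₂) / 2 →
    ∫ z : (Fin N → ℝ) × (Fin N → ℝ),
        Real.exp ((quadForm Sη⁻¹ (Δρ₂ - z.2) - quadForm Sη⁻¹ (Δρ₁ - z.1)) / 2) *
          gaussDensity μ₁ S₁ z.1 * gaussDensity μ₂ S₂ z.2
      = Real.sqrt (T₁.det * T₂.det / (S₁.det * S₂.det)) * Real.exp (-C₁ - C₂) := by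
  rintro T₁ T₂ rfl rfl α₁ α₂ rfl rfl C₁ C₂ rfl rfl
  have hP₁ : (Sη⁻¹ + S₁⁻¹).PosDef := hη.inv.add h1.inv
  have hP₂ : (-Sη⁻¹ + S₂⁻¹).PosDef := by
    rw [neg_add_eq_sub]
    exact h2.inv_sub_inv hdiff
  have hfactor (z : (Fin N → ℝ) × (Fin N → ℝ)) :
      exp ((quadForm Sη⁻¹ (Δρ₂ - z.2) - quadForm Sη⁻¹ (Δρ₁ - z.1)) / 2) *
        gaussDensity μ₁ S₁ z.1 * gaussDensity μ₂ S₂ z.2 =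
      (exp (-quadForm Sη⁻¹ (z.1 - Δρ₁) / 2) * gaussDensity μ₁ S₁ z.1) *
        (exp (-quadForm (-Sη⁻¹) (z.2 - Δρ₂) / 2) * gaussDensity μ₂ S₂ z.2) := by
    rw [quadForm_neg, quadForm_sub_comm _ z.1, quadForm_sub_comm _ z.2, sub_eq_neg_add,
      add_div, exp_add, neg_neg]
    ring
  simp_rw [hfactor]
  rw [Measure.volume_eq_prod,
    integral_prod_mul (fun x => exp (-quadForm Sη⁻¹ (x - Δρ₁) / 2) * gaussDensity μ₁ S₁ x)
      (fun y => exp (-quadForm (-Sη⁻¹) (y - Δρ₂) / 2) * gaussDensity μ₂ S₂ y),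
    integral_exp_neg_quadForm_mul_gaussDensity hη.inv.isSymm h1 hP₁,
    integral_exp_neg_quadForm_mul_gaussDensity hη.inv.isSymm.neg h2 hP₂]
  rw [neg_add_eq_sub, neg_mulVec, neg_add_eq_sub, quadForm_neg,
    nonsing_inv_nonsing_inv _ hP₁.isUnit_det,
    nonsing_inv_nonsing_inv _ (h2.inv_sub_inv hdiff).isUnit_det]
  rw [← div_mul_div_comm, sqrt_mul (div_nonneg hP₁.inv.det_pos.le h1.det_pos.le),
    mul_mul_mul_comm, ← exp_add]
  congr 2
  ring
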